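/- Let w: ℝ → ℝ be smooth and let x ∈ ℝ satisfy w′(x) ≠ 0, and let λ be a real number with λ < e^{2w(x)}. Define Θ(x) = e^{2w(x)}/(e^{2w(x)} − λ). Then (1/8)·Θ(x) + (1/(24 w′(x)))·( ∂_xΘ(x) + √(Θ(x)) · ∂_x[√Θ](x) ) = (1/4)Θ(x) − (1/8)Θ(x)², where ∂_x denotes differentiation in x with λ fixed. Equivalently: the function ℋ₁(w, w_x) = (1/24) log w_x + (1/8) w is a solution of the genus-one part of the loop equation of the fractional Volterra hierarchy of (−1/2, 1, 1)-type. -/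

import Mathlib

/-- The function `H₁(w, wₓ) = (1/24) log wₓ + (1/8) w` solves the genus-one part of the
loop equation of the fractional Volterra hierarchy of `(−1/2, 1, 1)`-type:
`(1/8)Θ + (1/(24 wₓ))(∂ₓΘ + √Θ ∂ₓ√Θ) = (1/4)Θ − (1/8)Θ²`,
where `Θ = e^{2w}/(e^{2w} − λ)`. -/
theorem genus_one_FVH_loop_equation (w : ℝ → ℝ) (hw : ContDiff ℝ (⊤ : ℕ∞) w) (x : ℝ)
    (h1 : deriv w x ≠ 0) (lam : ℝ) (h2 : lam < Real.exp (2 * w x))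
    (Θ : ℝ → ℝ)
    (hΘ : Θ = fun y => Real.exp (2 * w y) / (Real.exp (2 * w y) - lam)) :
    (1 / 8) * Θ x
      + (1 / (24 * deriv w x)) *
          (deriv Θ x + Real.sqrt (Θ x) * deriv (fun y => Real.sqrt (Θ y)) x)
      = (1 / 4) * Θ x - (1 / 8) * (Θ x) ^ 2 := by
  set d := deriv w x with hd
  have hw' : HasDerivAt w d x := (hw.differentiable (by simp) x).hasDerivAt
  have hE : HasDerivAt (fun y => Real.exp (2 * w y)) (Real.exp (2 * w x) * (2 * d)) x := by
    simpa using (hw'.const_mul 2).exp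
  set A := Real.exp (2 * w x) with hA
  have hApos : 0 < A - lam := sub_pos.mpr h2
  have hΘx : Θ x = A / (A - lam) := by rw [hΘ]
  have hΘpos : 0 < Θ x := by rw [hΘx]; exact div_pos (Real.exp_pos _) hApos
  have hΘ' : HasDerivAt Θ ((A * (2 * d) * (A - lam) - A * (A * (2 * d))) / (A - lam) ^ 2) x := by
    rw [hΘ]; exact hE.div (hE.sub_const lam) (ne_of_gt hApos)
  have hS : HasDerivAt (fun y => Real.sqrt (Θ y))
      ((A * (2 * d) * (A - lam) - A * (A * (2 * d))) / (A - lam) ^ 2 / (2 * Real.sqrt (Θ x))) x :=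
    hΘ'.sqrt (ne_of_gt hΘpos)
  have hsq : Real.sqrt (Θ x) ≠ 0 := ne_of_gt (Real.sqrt_pos.mpr hΘpos)
  rw [hΘ'.deriv, hS.deriv]
  have key : Real.sqrt (Θ x) *
      ((A * (2 * d) * (A - lam) - A * (A * (2 * d))) / (A - lam) ^ 2 / (2 * Real.sqrt (Θ x)))
      = (A * (2 * d) * (A - lam) - A * (A * (2 * d))) / (A - lam) ^ 2 / 2 := by
    field_simp
  rw [key, hΘx]
  have hAl : A - lam ≠ 0 := ne_of_gt hApos
  field_simp
  ring
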